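/- arXiv:1303.5881 — 3 statements merged into one kernel-verified Lean document; each statement's English description precedes it below -/
import Mathlib

section
/- Let L be a Zinbiel algebra with a basis {e₁, ..., eₙ} (n ≥ k) such that e₁∘eᵢ = e_{i+1} for 1 ≤ i ≤ k−1. Then eᵢ∘eⱼ = C(i+j−1, j) · e_{i+j} for all i, j ≥ 1 with i+j ≤ k, where C(m, j) denotes the binomial coefficient. -/
/-- A Zinbiel algebra over ℂ: a module with a bilinear product `circ` satisfying
`(x∘y)∘z = x∘(y∘z) + x∘(z∘y)`. -/
class ZinbielAlgebra (L : Type*) [AddCommGroup L] [Module ℂ L] where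
  circ : L →ₗ[ℂ] L →ₗ[ℂ] L
  zinbiel : ∀ x y z : L, circ (circ x y) z = circ x (circ y z) + circ x (circ z y)

open ZinbielAlgebra

/-- In a Zinbiel algebra with adapted basis elements satisfying e₁∘eᵢ = e_{i+1}
for 1 ≤ i ≤ k-1, one has eᵢ∘eⱼ = C(i+j-1, j) • e_{i+j} for 2 ≤ i+j ≤ k. -/
theorem stmt5 {L : Type*} [AddCommGroup L] [Module ℂ L] [ZinbielAlgebra L]
    (n k : ℕ) (hnk : k ≤ n) (e : ℕ → L)
    (h : ∀ i, 1 ≤ i → i ≤ k - 1 → circ (e 1) (e i) = e (i + 1)) :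
    ∀ i j, 1 ≤ i → 1 ≤ j → i + j ≤ k →
      circ (e i) (e j) = (((i + j - 1).choose j : ℕ) : ℂ) • e (i + j) := by
  suffices H : ∀ s i j, i + j = s → 1 ≤ i → 1 ≤ j → i + j ≤ k →
      circ (e i) (e j) = (((i + j - 1).choose j : ℕ) : ℂ) • e (i + j) by
    intro i j hi hj hij
    exact H (i + j) i j rfl hi hj hij
  intro s
  induction s using Nat.strong_induction_on with
  | _ s IH =>
    intro i j hs hi hj hij
    obtain ⟨m, rfl⟩ : ∃ m, i = m + 1 := ⟨i - 1, (Nat.succ_pred_eq_of_pos hi).symm⟩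
    rcases Nat.eq_zero_or_pos m with rfl | hm
    · -- base case i = 1
      have h1 : (0:ℕ) + 1 + j - 1 = j := by omega
      have h2 : (0:ℕ) + 1 + j = j + 1 := by omega
      rw [h1, h2, Nat.choose_self, Nat.cast_one, one_smul]
      exact h j hj (by omega)
    · -- inductive step
      have hem : e (m + 1) = circ (e 1) (e m) := (h m hm (by omega)).symm
      rw [hem, zinbiel]
      have h1 : circ (e m) (e j) = (((m + j - 1).choose j : ℕ) : ℂ) • e (m + j) :=
        IH (m + j) (by omega) m j rfl hm hj (by omega)
      have h2 : circ (e j) (e m) = (((j + m - 1).choose m : ℕ) : ℂ) • e (j + m) :=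
        IH (j + m) (by omega) j m rfl hj hm (by omega)
      rw [h1, h2, show j + m = m + j from Nat.add_comm j m, map_smul, map_smul,
        h (m + j) (by omega) (by omega)]
      rw [← add_smul, ← Nat.cast_add]
      have key : (m + j - 1).choose j + (m + j - 1).choose m = (m + 1 + j - 1).choose j := by
        obtain ⟨t, rfl⟩ : ∃ t, j = t + 1 := ⟨j - 1, by omega⟩
        have e1 : m + (t + 1) - 1 = m + t := by omega
        have e2 : m + 1 + (t + 1) - 1 = m + t + 1 := by omega
        rw [e1, e2]
        have hmsym : (m + t).choose m = (m + t).choose t := by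
          rw [← Nat.choose_symm (Nat.le_add_right m t)]
          congr 1
          omega
        rw [hmsym, Nat.choose_succ_succ (m + t) t]
        simp only [Nat.succ_eq_add_one]
        omega
      rw [key, show m + j + 1 = m + 1 + j from by omega]
end

section
/- In a Zinbiel algebra with elements e₁, e_{n-1}, e_k satisfying e_{n-1}∘e₁ = 0, e₁∘e_k = e_{k+1}, e_k∘e₁ = k·e_{k+1}, and e_{n-1}∘e_k = 0, it follows that e_{n-1}∘e_{k+1} = 0. -/
open ZinbielAlgebra

theorem stmt6 {L : Type*} [AddCommGroup L] [Module ℂ L] [ZinbielAlgebra L]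
    (k : ℕ) (e1 ek ek1 en1 : L)
    (h1 : circ en1 e1 = 0) (h2 : circ e1 ek = ek1)
    (h3 : circ ek e1 = (k : ℂ) • ek1) (h4 : circ en1 ek = 0) :
    circ en1 ek1 = 0 := by
  have key := zinbiel en1 e1 ek
  rw [h1, h2, h3, map_smul] at key
  simp only [map_zero, LinearMap.zero_apply] at key
  have : ((k : ℂ) + 1) • circ en1 ek1 = 0 := by
    rw [add_smul, one_smul, add_comm]
    exact key.symm
  have hk : (k : ℂ) + 1 ≠ 0 := Nat.cast_add_one_ne_zero k
  exact (smul_eq_zero.mp this).resolve_left hk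
end

section
/- In a Zinbiel algebra, if e₁∘e₁ = 0 and e₁∘e₂ = e₃ and e₃∘e₁ = 0 and e₁∘e₃ = e₄, then e₁∘e₄ = 0. -/
open ZinbielAlgebra

theorem stmt9 {L : Type*} [AddCommGroup L] [Module ℂ L] [ZinbielAlgebra L]
    (e1 e2 e3 e4 : L)
    (h1 : circ e1 e1 = 0) (h2 : circ e1 e2 = e3) (h3 : circ e3 e1 = 0)
    (h4 : circ e1 e3 = e4) :
    circ e1 e4 = 0 := by
  have := zinbiel e1 e1 e3
  simp [h1, h3, h4] at this
  exact this.symm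
end
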